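/- The stop-top-down traversal is infallible: define stop_td(s) as the least fixed point of v ↦ Choice s (All v); then for every argument strategy s whose evaluation relation is total on every term (for each t, either s succeeds or fails on t), and for every term t, there exists t' such that stop_td(s) applied to t evaluates to some t' (it never evaluates to none). -/

import Mathlib

inductive Term where
  | Node : String → List Term → Term

inductive Strategy where
  | Id : Strategy
  | Fail : Strategy
  | Seq : Strategy → Strategy → Strategy
  | Choice : Strategy → Strategy → Strategy
  | All : Strategy → Strategy
  | One : Strategy → Strategy

inductive eval : Strategy → Term → Option Term → Prop where
  | id : ∀ t, eval .Id t (some t)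
  | fail : ∀ t, eval .Fail t none
  | seq_fail : ∀ {s s' : Strategy} {t : Term},
      eval s t none → eval (.Seq s s') t none
  | seq_ok : ∀ {s s' : Strategy} {t t' : Term} {r : Option Term},
      eval s t (some t') → eval s' t' r → eval (.Seq s s') t r
  | choice_ok : ∀ {s s' : Strategy} {t t' : Term},
      eval s t (some t') → eval (.Choice s s') t (some t')
  | choice_fail : ∀ {s s' : Strategy} {t : Term} {r : Option Term},
      eval s t none → eval s' t r → eval (.Choice s s') t r
  | all_ok : ∀ {s : Strategy} {c : String} {ts ts' : List Term},
      ts'.length = ts.length →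
      (∀ i (hi : i < ts.length) (hi' : i < ts'.length),
        eval s (ts.get ⟨i, hi⟩) (some (ts'.get ⟨i, hi'⟩))) →
      eval (.All s) (.Node c ts) (some (.Node c ts'))
  | all_fail : ∀ {s : Strategy} {c : String} {ts : List Term} {t : Term},
      t ∈ ts → eval s t none → eval (.All s) (.Node c ts) none
  | one_ok : ∀ {s : Strategy} {c : String} {ts : List Term} {t' : Term} {i : ℕ}
      (hi : i < ts.length),
      eval s (ts.get ⟨i, hi⟩) (some t') →
      (∀ j (hj : j < i), eval s (ts.get ⟨j, Nat.lt_trans hj hi⟩) none) →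
      eval (.One s) (.Node c ts) (some (.Node c (ts.set i t')))
  | one_fail : ∀ {s : Strategy} {c : String} {ts : List Term},
      (∀ t ∈ ts, eval s t none) → eval (.One s) (.Node c ts) none

inductive evalStopTd (s : Strategy) : Term → Option Term → Prop where
  | ok : ∀ {t t' : Term}, eval s t (some t') → evalStopTd s t (some t')
  | all_ok : ∀ {c : String} {ts ts' : List Term},
      eval s (.Node c ts) none →
      ts'.length = ts.length →
      (∀ i (hi : i < ts.length) (hi' : i < ts'.length),
        evalStopTd s (ts.get ⟨i, hi⟩) (some (ts'.get ⟨i, hi'⟩))) →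
      evalStopTd s (.Node c ts) (some (.Node c ts'))
  | all_fail : ∀ {c : String} {ts : List Term} {t : Term},
      eval s (.Node c ts) none →
      t ∈ ts → evalStopTd s t none →
      evalStopTd s (.Node c ts) none

/-! Failure of `stop_td s` at a node requires failure at one of its children, so a failing
derivation would descend forever into the (finite) term; hence it never fails, whatever `s` is.
Success follows by induction on the term: if `s` succeeds we stop, and if `s` fails (the only
other possibility, by totality) the children all succeed by induction, so `All` succeeds. -/

theorem List.exists_forall₂_of_forall_exists {α β : Type*} {R : α → β → Prop} {l : List α}
    (h : ∀ x ∈ l, ∃ y, R x y) : ∃ l', Forall₂ R l l' := by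
  induction l with
  | nil => exact ⟨[], .nil⟩
  | cons a l ih =>
    obtain ⟨b, hb⟩ := h a mem_cons_self
    obtain ⟨l', hl'⟩ := ih fun x hx => h x (mem_cons_of_mem a hx)
    exact ⟨b :: l', .cons hb hl'⟩

theorem evalStopTd.ne_none {s : Strategy} {t : Term} {r : Option Term}
    (h : evalStopTd s t r) : r ≠ none := by
  induction h with
  | ok => exact Option.some_ne_none _
  | all_ok => exact Option.some_ne_none _
  | all_fail _ _ _ ih => exact absurd rfl ih

theorem evalStopTd.exists_some {s : Strategy} (htot : ∀ t, ∃ r, eval s t r) :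
    ∀ t, ∃ t', evalStopTd s t (some t')
  | .Node c ts => by
    obtain ⟨r, hr⟩ := htot (.Node c ts)
    cases r with
    | some t' => exact ⟨t', .ok hr⟩
    | none =>
      have hchildren : ∀ x ∈ ts, ∃ x', evalStopTd s x (some x') := fun x _ =>
        evalStopTd.exists_some htot x
      obtain ⟨ts', hts'⟩ := List.exists_forall₂_of_forall_exists hchildren
      obtain ⟨hlen, hget⟩ := List.forall₂_iff_get.mp hts'
      exact ⟨_, .all_ok hr hlen.symm hget⟩

theorem stmt17 : ∀ (s : Strategy),
    (∀ t : Term, ∃ r : Option Term, eval s t r) →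
    ∀ t : Term, (∃ t' : Term, evalStopTd s t (some t')) ∧ ¬ evalStopTd s t none :=
  fun _ htot t => ⟨evalStopTd.exists_some htot t, fun h => h.ne_none rfl⟩
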